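/- arXiv:1512.00280 — 4 statements merged into one kernel-verified Lean document; each statement's English description precedes it below -/
import Mathlib

section
/- Once a rotor-router walk on a finite connected bidirected graph has settled into its Eulerian circuit, at every subsequent time step the current rotor configuration ρ together with the current chip position a is a unicycle: the rotor arrows contain exactly one directed cycle, and the chip is located at a vertex of that cycle. -/
open Function

/-- A directed graph equipped with a rotor mechanism: `adj` is the adjacency
relation and `next v` advances a rotor direction at `v` to the next neighbour
of `v` in the cyclic order at `v`. -/
structure RotorGraph (V : Type) where
  adj : V → V → Prop
  next : V → V → V

namespace RotorGraph

variable {V : Type}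

/-- The axioms making `(adj, next)` a locally finite bidirected graph together
with a rotor mechanism (a cyclic order of the neighbours at each vertex). -/
structure IsValid (G : RotorGraph V) : Prop where
  symm : ∀ v w, G.adj v w → G.adj w v
  locFin : ∀ v, {w | G.adj v w}.Finite
  next_adj : ∀ v w, G.adj v w → G.adj v (G.next v w)
  next_inj : ∀ v w w', G.adj v w → G.adj v w' → G.next v w = G.next v w' → w = w'
  next_cyc : ∀ v w w', G.adj v w → G.adj v w' → ∃ n, (G.next v)^[n] w = w'

/-- The degree of a vertex: the number of its neighbours. -/
noncomputable def deg (G : RotorGraph V) (v : V) : ℕ := {w | G.adj v w}.ncard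

end RotorGraph

/-- A state of the rotor-router walk: a rotor configuration together with the
position of the chip. -/
structure RotorState (V : Type) where
  rotor : V → V
  chip : V

/-- One step of the rotor-router walk: the rotor at the chip's current vertex is
advanced to the next neighbour in the cyclic order, and the chip then moves to
the neighbour now pointed to by that rotor. -/
noncomputable def RotorGraph.step {V : Type} (G : RotorGraph V) (s : RotorState V) :
    RotorState V :=
  letI := Classical.decEq V
  let r := Function.update s.rotor s.chip (G.next s.chip (s.rotor s.chip))
  ⟨r, r s.chip⟩

/-- The state of the rotor-router walk after `t` steps, started from state `s`. -/
noncomputable def RotorGraph.walk {V : Type} (G : RotorGraph V) (s : RotorState V)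
    (t : ℕ) : RotorState V := G.step^[t] s

/-- A rotor configuration is valid when every rotor points to a neighbour. -/
def ValidRotor {V : Type} (G : RotorGraph V) (ρ : V → V) : Prop := ∀ v, G.adj v (ρ v)

/-- The number of times the rotor at `u` has been advanced during the first `T`
steps of the walk started from `s`: each time the chip occupies `u` its rotor is
advanced exactly once. -/
noncomputable def advCount {V : Type} (G : RotorGraph V) (s : RotorState V) (u : V)
    (T : ℕ) : ℕ :=
  {t | t < T ∧ (G.walk s t).chip = u}.ncard

/-- A vertex lies on a directed cycle of the rotor configuration `ρ`. -/
def OnDirCycle {V : Type} (ρ : V → V) (x : V) : Prop := ∃ n, 0 < n ∧ ρ^[n] x = x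

/-- The rotors along the cycle `c` point backwards along `c` (the cycle is
traversed in the reversed direction). -/
def ReversedOn {V : Type} {m : ℕ} (ρ : V → V) (c : ZMod m → V) : Prop :=
  ∀ i, ρ (c i) = c (i - 1)

/-- The winding number (as a real number) of the closed polygonal curve through
the points `pos (c 0), pos (c 1), …` around the point `p`. -/
noncomputable def polyWinding {V : Type} {m : ℕ} (pos : V → ℂ) (c : ZMod m → V)
    (p : ℂ) : ℝ :=
  (∑ i ∈ Finset.range m,
      Complex.arg ((pos (c ((i : ZMod m) + 1)) - p) / (pos (c (i : ZMod m)) - p))) /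
    (2 * Real.pi)

/-- The point `p` lies on the closed polygonal curve determined by the cycle `c`. -/
def OnPoly {V : Type} {m : ℕ} (pos : V → ℂ) (c : ZMod m → V) (p : ℂ) : Prop :=
  ∃ i : ZMod m, p ∈ segment ℝ (pos (c i)) (pos (c (i + 1)))

/-- The point `p` is interior to the closed polygonal curve determined by `c`. -/
def IntPt {V : Type} {m : ℕ} (pos : V → ℂ) (c : ZMod m → V) (p : ℂ) : Prop :=
  ¬ OnPoly pos c p ∧ polyWinding pos c p ≠ 0

/-- The cycle `c` is oriented clockwise: it has interior points and it winds
once clockwise around each of them. -/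
def ClockwiseCycle {V : Type} {m : ℕ} (pos : V → ℂ) (c : ZMod m → V) : Prop :=
  (∃ p, IntPt pos c p) ∧ ∀ p, IntPt pos c p → polyWinding pos c p = -1

/-- The cycle `c` is oriented anticlockwise: it has interior points and it winds
once anticlockwise around each of them. -/
def AnticlockwiseCycle {V : Type} {m : ℕ} (pos : V → ℂ) (c : ZMod m → V) : Prop :=
  (∃ p, IntPt pos c p) ∧ ∀ p, IntPt pos c p → polyWinding pos c p = 1

/-- A straight-line embedding of the graph in the plane is planar: vertices get
distinct positions, edges meet only at common endpoints and no vertex lies in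
the interior of an edge. -/
structure IsPlanarEmb {V : Type} (G : RotorGraph V) (pos : V → ℂ) : Prop where
  inj : Function.Injective pos
  edges : ∀ u v u' v', G.adj u v → G.adj u' v' → ({u, v} : Set V) ≠ {u', v'} →
    ∀ p, p ∈ segment ℝ (pos u) (pos v) → p ∈ segment ℝ (pos u') (pos v') →
      p ∈ pos '' {u, v} ∧ p ∈ pos '' {u', v'}
  vtx : ∀ u v x, G.adj u v → pos x ∈ segment ℝ (pos u) (pos v) → x = u ∨ x = v

/-- `u` belongs to the forest rooted at the cycle `c` in the rotor configuration
`ρ`: following the rotor arrows from `u` reaches `c` without first meeting any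
directed cycle of rotor arrows. -/
def InForest {V : Type} {m : ℕ} (ρ : V → V) (c : ZMod m → V) (u : V) : Prop :=
  ∃ n, ρ^[n] u ∈ Set.range c ∧
    ∀ j < n, ρ^[j] u ∉ Set.range c ∧ ¬ OnDirCycle ρ (ρ^[j] u)

/-- The square lattice `ℤ²` with the clockwise rotor mechanism
(North → East → South → West → North). -/
def Z2 : RotorGraph (ℤ × ℤ) where
  adj v w := w = (v.1, v.2 + 1) ∨ w = (v.1 + 1, v.2) ∨ w = (v.1, v.2 - 1) ∨ w = (v.1 - 1, v.2)
  next v w := (v.1 + (w.2 - v.2), v.2 - (w.1 - v.1))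

/-- The standard embedding of `ℤ²` in the plane. -/
noncomputable def z2pos : ℤ × ℤ → ℂ := fun p => (p.1 : ℂ) + (p.2 : ℂ) * Complex.I

section Aux

attribute [local instance] Classical.propDecidable

variable {V : Type} (G : RotorGraph V)

lemma walk_succ (s : RotorState V) (t : ℕ) :
    G.walk s (t + 1) = G.step (G.walk s t) := Function.iterate_succ_apply' _ _ _

lemma step_rotor_apply (s : RotorState V) (v : V) :
    (G.step s).rotor v =
      if v = s.chip then G.next s.chip (s.rotor s.chip) else s.rotor v := by
  simp [RotorGraph.step, Function.update_apply]

lemma step_chip (s : RotorState V) : (G.step s).chip = (G.step s).rotor s.chip := rfl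

lemma chip_succ (s : RotorState V) (t : ℕ) :
    (G.walk s (t + 1)).chip = (G.walk s (t + 1)).rotor ((G.walk s t).chip) := by
  rw [walk_succ]; exact step_chip G _

lemma valid_walk (hG : G.IsValid) (s : RotorState V) (hs : ValidRotor G s.rotor) (t : ℕ) :
    ValidRotor G (G.walk s t).rotor := by
  induction t with
  | zero => exact hs
  | succ t ih =>
    intro v
    rw [walk_succ, step_rotor_apply]
    split
    · next h => subst h; exact hG.next_adj _ _ (ih _)
    · exact ih v

lemma chip_adj (hG : G.IsValid) (s : RotorState V) (hs : ValidRotor G s.rotor) (t : ℕ) :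
    G.adj (G.walk s t).chip (G.walk s (t + 1)).chip := by
  rw [chip_succ, walk_succ, step_rotor_apply]
  simp only [if_pos rfl]
  exact hG.next_adj _ _ (valid_walk G hG s hs t _)


lemma rotor_count (s : RotorState V) (v : V) (t t' : ℕ) (h : t ≤ t') :
    (G.walk s t').rotor v =
      (G.next v)^[((Finset.Ico t t').filter (fun u => (G.walk s u).chip = v)).card]
        ((G.walk s t).rotor v) := by
  induction t', h using Nat.le_induction with
  | base => simp
  | succ t' ht ih =>
    rw [walk_succ, step_rotor_apply, Nat.Ico_succ_right_eq_insert_Ico ht,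
      Finset.filter_insert]
    by_cases hc : (G.walk s t').chip = v
    · subst hc
      rw [if_pos rfl, if_pos rfl, Finset.card_insert_of_notMem (by simp),
        Function.iterate_succ_apply', ← ih]
    · rw [if_neg (fun h => hc h.symm), if_neg hc, ih]

lemma next_iter_deg (hG : G.IsValid) (v w : V) (hw : G.adj v w) :
    (G.next v)^[G.deg v] w = w := by
  classical
  have hfin : {x | G.adj v x}.Finite := hG.locFin v
  haveI : Finite {x | G.adj v x} := hfin.to_subtype
  haveI : Fintype {x | G.adj v x} := hfin.fintype
  set N := {x | G.adj v x} with hNdef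
  let f : N → N := fun x => ⟨G.next v x, hG.next_adj v x x.2⟩
  have hinj : Function.Injective f := fun a b hab =>
    Subtype.ext (hG.next_inj v a b a.2 b.2 (congrArg Subtype.val hab))
  let g : Equiv.Perm N := Equiv.ofBijective f (Finite.injective_iff_bijective.mp hinj)
  have hg : ∀ (n : ℕ) (x : N), (((g ^ n) x : N) : V) = (G.next v)^[n] (x : V) := by
    intro n
    induction n with
    | zero => intro x; simp
    | succ n ih =>
      intro x
      rw [pow_succ, Equiv.Perm.mul_apply, Function.iterate_succ_apply]
      exact ih (g x)
  set x : N := ⟨w, hw⟩ with hxdef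
  -- x has a positive period
  have hex : ∃ n, 0 < n ∧ (g ^ n) x = x := by
    refine ⟨orderOf g, ?_, ?_⟩
    · exact orderOf_pos g
    · rw [pow_orderOf_eq_one]; rfl
  set p := Nat.find hex with hpdef
  obtain ⟨hp0, hpx⟩ : 0 < p ∧ (g ^ p) x = x := Nat.find_spec hex
  have hmin : ∀ d, 0 < d → d < p → (g ^ d) x ≠ x := by
    intro d hd0 hdp hcon
    exact Nat.find_min hex hdp ⟨hd0, hcon⟩
  have hcancel : ∀ i j, i < j → (g ^ i) x = (g ^ j) x → (g ^ (j - i)) x = x := by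
    intro i j hij hEq
    have hsplit : j = i + (j - i) := by omega
    have h1 : (g ^ j) x = (g ^ i) ((g ^ (j - i)) x) := by
      conv_lhs => rw [hsplit]
      rw [pow_add, Equiv.Perm.mul_apply]
    have h2 : (g ^ i) ((g ^ (j - i)) x) = (g ^ i) x := by rw [← h1, hEq]
    exact (Equiv.injective _) h2
  have hper : ∀ k, (g ^ (p * k)) x = x := by
    intro k
    induction k with
    | zero => simp
    | succ k ih =>
      rw [Nat.mul_succ, pow_add, Equiv.Perm.mul_apply, hpx]
      exact ih
  let φ : Fin p → N := fun k => (g ^ (k : ℕ)) x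
  have hφinj : Function.Injective φ := by
    intro i j hEq
    by_contra hne
    have hi : (i : ℕ) < p := i.2
    have hj : (j : ℕ) < p := j.2
    rcases lt_or_gt_of_ne (fun h : (i:ℕ) = (j:ℕ) => hne (Fin.ext h)) with h | h
    · exact hmin _ (by omega) (by omega) (hcancel _ _ h hEq)
    · exact hmin _ (by omega) (by omega) (hcancel _ _ h hEq.symm)
  have hφsurj : Function.Surjective φ := by
    intro y
    obtain ⟨n, hn⟩ : ∃ n, (G.next v)^[n] (x : V) = (y : V) :=
      hG.next_cyc v w y hw y.2
    have hny : (g ^ n) x = y := Subtype.ext (by rw [hg]; exact hn)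
    refine ⟨⟨n % p, Nat.mod_lt _ hp0⟩, ?_⟩
    have : (g ^ n) x = (g ^ (n % p)) x := by
      conv_lhs => rw [← Nat.mod_add_div n p]
      rw [pow_add, Equiv.Perm.mul_apply, hper]
    simp only [φ]
    rw [← this, hny]
  have hcard : p = Fintype.card N := by
    rw [← Fintype.card_fin p]
    exact Fintype.card_of_bijective ⟨hφinj, hφsurj⟩
  have hdeg : G.deg v = p := by
    rw [RotorGraph.deg, ← Nat.card_coe_set_eq, Nat.card_eq_fintype_card, hcard]
  rw [hdeg, ← hg p x, hpx]


lemma RotorState.ext' {a b : RotorState V} (h1 : a.rotor = b.rotor)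
    (h2 : a.chip = b.chip) : a = b := by
  cases a; cases b; cases h1; cases h2; rfl

lemma count_eq_deg (hG : G.IsValid) (s : RotorState V) (hs : ValidRotor G s.rotor)
    (t : ℕ)
    (heul : ∀ e : V × V, G.adj e.1 e.2 →
      {u | t ≤ u ∧ u < t + {e : V × V | G.adj e.1 e.2}.ncard ∧
          (G.walk s u).chip = e.1 ∧ (G.walk s (u + 1)).chip = e.2}.ncard = 1)
    (v : V) :
    ((Finset.Ico t (t + {e : V × V | G.adj e.1 e.2}.ncard)).filter
        (fun u => (G.walk s u).chip = v)).card = G.deg v := by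
  classical
  set L := {e : V × V | G.adj e.1 e.2}.ncard with hL
  set F := (Finset.Ico t (t + L)).filter (fun u => (G.walk s u).chip = v) with hF
  have hnbfin : {w | G.adj v w}.Finite := hG.locFin v
  haveI := hnbfin.fintype
  set nb := hnbfin.toFinset with hnb
  have hmap : ∀ u ∈ F, (G.walk s (u + 1)).chip ∈ nb := by
    intro u hu
    rw [hnb, Set.Finite.mem_toFinset]
    have hadj := chip_adj G hG s hs u
    rw [(Finset.mem_filter.mp hu).2] at hadj
    exact hadj
  rw [Finset.card_eq_sum_card_fiberwise hmap]
  have hone : ∀ w ∈ nb, (F.filter (fun u => (G.walk s (u + 1)).chip = w)).card = 1 := by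
    intro w hw
    have hadj : G.adj v w := by rwa [hnb, Set.Finite.mem_toFinset] at hw
    have h1 := heul (v, w) hadj
    have hSeq : {u | t ≤ u ∧ u < t + L ∧ (G.walk s u).chip = v ∧
        (G.walk s (u + 1)).chip = w} =
        ↑(F.filter (fun u => (G.walk s (u + 1)).chip = w)) := by
      ext u
      simp only [hF, Finset.coe_filter, Finset.mem_filter, Finset.mem_Ico,
        Set.mem_setOf_eq]
      tauto
    rw [hSeq, Set.ncard_coe_finset] at h1
    exact h1
  rw [Finset.sum_congr rfl hone, Finset.sum_const, smul_eq_mul, mul_one]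
  rw [hnb, Set.Finite.card_toFinset, RotorGraph.deg, ← Nat.card_coe_set_eq,
    Nat.card_eq_fintype_card]

lemma walk_periodic (hG : G.IsValid) (s : RotorState V) (hs : ValidRotor G s.rotor)
    (t : ℕ)
    (hper : (G.walk s (t + {e : V × V | G.adj e.1 e.2}.ncard)).chip = (G.walk s t).chip)
    (heul : ∀ e : V × V, G.adj e.1 e.2 →
      {u | t ≤ u ∧ u < t + {e : V × V | G.adj e.1 e.2}.ncard ∧
          (G.walk s u).chip = e.1 ∧ (G.walk s (u + 1)).chip = e.2}.ncard = 1) :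
    G.walk s (t + {e : V × V | G.adj e.1 e.2}.ncard) = G.walk s t := by
  refine RotorState.ext' (funext fun v => ?_) hper
  rw [rotor_count G s v t _ (Nat.le_add_right _ _), count_eq_deg G hG s hs t heul v]
  exact next_iter_deg G hG v _ (valid_walk G hG s hs t v)

end Aux

/-- Once a rotor-router walk on a finite connected bidirected graph
has settled into its Eulerian circuit, at every subsequent time step the current
rotor configuration together with the current chip position is a unicycle: the
rotor arrows contain exactly one directed cycle (every vertex lying on a
directed cycle of rotor arrows is reachable from the chip along rotor arrows),
and the chip is located at a vertex of that cycle. -/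
theorem rotor_walk_in_eulerian_circuit_is_unicycle
    {V : Type} [Fintype V] (G : RotorGraph V) (hG : G.IsValid)
    (hconn : ∀ v w : V, Relation.ReflTransGen G.adj v w)
    (ρ0 : V → V) (hρ0 : ValidRotor G ρ0) (u : V) (t0 : ℕ)
    -- the walk has settled into its Eulerian circuit by time `t0`:
    (hper : ∀ t, t0 ≤ t →
      (G.walk ⟨ρ0, u⟩ (t + {e : V × V | G.adj e.1 e.2}.ncard)).chip =
        (G.walk ⟨ρ0, u⟩ t).chip)
    (heul : ∀ t, t0 ≤ t → ∀ e : V × V, G.adj e.1 e.2 →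
      {s | t ≤ s ∧ s < t + {e : V × V | G.adj e.1 e.2}.ncard ∧
          (G.walk ⟨ρ0, u⟩ s).chip = e.1 ∧
          (G.walk ⟨ρ0, u⟩ (s + 1)).chip = e.2}.ncard = 1) :
    ∀ t, t0 ≤ t →
      -- the chip lies on a directed cycle of the current rotor arrows
      OnDirCycle (G.walk ⟨ρ0, u⟩ t).rotor (G.walk ⟨ρ0, u⟩ t).chip ∧
      -- and that cycle is the unique one: every vertex on a directed cycle of
      -- rotor arrows lies on the rotor cycle through the chip
      (∀ x, OnDirCycle (G.walk ⟨ρ0, u⟩ t).rotor x →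
        ∃ n, ((G.walk ⟨ρ0, u⟩ t).rotor)^[n] (G.walk ⟨ρ0, u⟩ t).chip = x) := by
  classical
  intro t ht
  set s : RotorState V := ⟨ρ0, u⟩ with hsdef
  have hs : ValidRotor G s.rotor := hρ0
  set L := {e : V × V | G.adj e.1 e.2}.ncard with hLdef
  have hEq : G.walk s (t + L) = G.walk s t :=
    walk_periodic G hG s hs t (hper t ht) (heul t ht)
  rw [← hEq]
  set t' := t + L with ht'def
  set ρ := (G.walk s t').rotor with hρdef
  set a := (G.walk s t').chip with hadef
  have hvisit : ∀ v : V, ∃ m, t ≤ m ∧ m < t' ∧ (G.walk s m).chip = v := by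
    intro v
    have h1 := heul t ht (v, s.rotor v) (hs v)
    rw [Set.ncard_eq_one] at h1
    obtain ⟨m, hm⟩ := h1
    have hmem : m ∈ ({m} : Set ℕ) := rfl
    rw [← hm] at hmem
    exact ⟨m, hmem.1, hmem.2.1, hmem.2.2.1⟩
  have hL1 : 0 < L := by
    obtain ⟨m, h1, h2, _⟩ := hvisit u
    omega
  set f : V → ℕ := fun v => Nat.findGreatest (fun n => (G.walk s n).chip = v) (t' - 1)
    with hfdef
  have hfle : ∀ v, f v ≤ t' - 1 := fun v => Nat.findGreatest_le _
  have hfc : ∀ v, (G.walk s (f v)).chip = v := by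
    intro v
    obtain ⟨m, hm1, hm2, hm3⟩ := hvisit v
    simp only [hfdef]
    exact Nat.findGreatest_spec (P := fun n => (G.walk s n).chip = v) (n := t' - 1) (m := m) (by omega) hm3
  have hmax : ∀ v m, f v < m → m < t' → (G.walk s m).chip ≠ v := by
    intro v m h1 h2
    simp only [hfdef] at h1
    exact Nat.findGreatest_is_greatest (n := t' - 1) h1 (by omega)
  have hrot : ∀ v, ρ v = (G.walk s (f v + 1)).chip := by
    intro v
    have h1 : f v + 1 ≤ t' := by have := hfle v; omega
    have h2 : ((Finset.Ico (f v + 1) t').filter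
        (fun m => (G.walk s m).chip = v)).card = 0 := by
      rw [Finset.card_eq_zero, Finset.filter_eq_empty_iff]
      intro m hm
      rw [Finset.mem_Ico] at hm
      exact hmax v m (by omega) hm.2
    have h3 := rotor_count G s v (f v + 1) t' h1
    rw [h2] at h3
    simp only [Function.iterate_zero, id] at h3
    rw [← hρdef] at h3
    rw [chip_succ G s (f v), hfc v]
    exact h3
  have hbase : ∀ v, f v = t' - 1 → ∃ n, 0 < n ∧ ρ^[n] v = a := by
    intro v hfv
    refine ⟨1, one_pos, ?_⟩
    rw [Function.iterate_one, hrot v, hfv]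
    have h4 : t' - 1 + 1 = t' := by omega
    rw [h4]
  have hreach : ∀ k v, t' - 1 - f v ≤ k → ∃ n, 0 < n ∧ ρ^[n] v = a := by
    intro k
    induction k with
    | zero =>
      intro v hv
      exact hbase v (by have := hfle v; omega)
    | succ k ih =>
      intro v hv
      by_cases hfv : f v = t' - 1
      · exact hbase v hfv
      · have h1 : f v + 1 ≤ t' - 1 := by have := hfle v; omega
        have h2 : f v + 1 ≤ f (ρ v) := by
          simp only [hfdef]
          exact Nat.le_findGreatest h1 (hrot v).symm
        have h3 : t' - 1 - f (ρ v) ≤ k := by omega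
        obtain ⟨n, hn0, hna⟩ := ih (ρ v) h3
        exact ⟨n + 1, Nat.succ_pos _, by rw [Function.iterate_succ_apply, hna]⟩
  constructor
  · obtain ⟨n0, hn00, hn0a⟩ := hreach (t' - 1 - f a) a le_rfl
    exact ⟨n0, hn00, hn0a⟩
  · intro x hx
    obtain ⟨m, hm0, hmx⟩ := hx
    obtain ⟨k, hk0, hka⟩ := hreach (t' - 1 - f x) x le_rfl
    refine ⟨m * k - k, ?_⟩
    have hkk : m * k - k + k = m * k := by
      have : k ≤ m * k := Nat.le_mul_of_pos_left k hm0
      omega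
    rw [← hka, ← Function.iterate_add_apply, hkk, Function.iterate_mul]
    exact Function.iterate_fixed hmx k
end

section
/- Consider a rotor-router walk on a locally finite bidirected graph, started at a vertex u and run for t steps, with the chip now at vertex w. For every vertex x that the chip has visited and exited at least once during these t steps, the path obtained by starting at x and repeatedly following the current rotor arrows visits pairwise distinct vertices and terminates at the chip's current position w after finitely many steps. -/
open Function

private lemma min_witness_inj {V : Type} (f : V → V) (x w : V) (N : ℕ)
    (hN : f^[N] x = w)
    (hinj : ∀ j k, j < N → k < N → f^[j] x = f^[k] x → j = k) :
    ∃ n, f^[n] x = w ∧ ∀ j k, j ≤ n → k ≤ n → f^[j] x = f^[k] x → j = k := by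
  classical
  have hex : ∃ m, f^[m] x = w := ⟨N, hN⟩
  refine ⟨Nat.find hex, Nat.find_spec hex, ?_⟩
  have hmN : Nat.find hex ≤ N := Nat.find_min' hex hN
  intro j k hj hk heq
  rcases eq_or_lt_of_le hj with rfl | hj'
  · rcases eq_or_lt_of_le hk with rfl | hk'
    · rfl
    · exact absurd (heq.symm.trans (Nat.find_spec hex)) (Nat.find_min hex hk')
  · rcases eq_or_lt_of_le hk with rfl | hk'
    · exact absurd (heq.trans (Nat.find_spec hex)) (Nat.find_min hex hj')
    · exact hinj j k (hj'.trans_le hmN) (hk'.trans_le hmN) heq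

/-- for a rotor-router walk on a locally finite bidirected graph,
started at `u` and run for `t` steps, and for every vertex `x` that the chip has
visited and exited at least once during these `t` steps, the path obtained by
following the current rotor arrows from `x` visits pairwise distinct vertices
and terminates at the chip's current position after finitely many steps. -/
theorem rotor_path_from_exited_vertex_reaches_chip
    {V : Type} (G : RotorGraph V) (hG : G.IsValid)
    (ρ0 : V → V) (hρ0 : ValidRotor G ρ0) (u : V) (t : ℕ)
    (x : V) (hx : ∃ s < t, (G.walk ⟨ρ0, u⟩ s).chip = x) :
    ∃ n, ((G.walk ⟨ρ0, u⟩ t).rotor)^[n] x = (G.walk ⟨ρ0, u⟩ t).chip ∧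
      ∀ j k, j ≤ n → k ≤ n →
        ((G.walk ⟨ρ0, u⟩ t).rotor)^[j] x = ((G.walk ⟨ρ0, u⟩ t).rotor)^[k] x →
        j = k := by
  classical
  induction t generalizing x with
  | zero => obtain ⟨s, hs, _⟩ := hx; omega
  | succ t ih =>
    set st := G.walk ⟨ρ0, u⟩ t with hst
    have hw1 : G.walk ⟨ρ0, u⟩ (t + 1) = G.step st := by
      rw [hst]; exact Function.iterate_succ_apply' _ _ _
    set v := st.chip with hv
    set ρ' := st.rotor with hρ'
    have hρ_ne : ∀ y, y ≠ v → (G.step st).rotor y = ρ' y := by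
      intro y hy
      exact Function.update_of_ne hy _ _
    have hchip : (G.step st).chip = (G.step st).rotor v := rfl
    rw [hw1]
    obtain ⟨s, hs, hsx⟩ := hx
    rcases Nat.lt_succ_iff_lt_or_eq.mp hs with hs' | rfl
    · obtain ⟨n, hn, hinj⟩ := ih x ⟨s, hs', hsx⟩
      have hagree : ∀ j, j ≤ n → ((G.step st).rotor)^[j] x = ρ'^[j] x := by
        intro j hj
        induction j with
        | zero => rfl
        | succ j ihj =>
          have hj' : j ≤ n := Nat.le_of_succ_le hj
          have hne : ρ'^[j] x ≠ v := by
            intro h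
            have := hinj j n hj' le_rfl (h.trans hn.symm)
            omega
          rw [Function.iterate_succ_apply', Function.iterate_succ_apply',
            ihj hj', hρ_ne _ hne]
      refine min_witness_inj _ _ _ (n + 1) ?_ ?_
      · rw [Function.iterate_succ_apply', hagree n le_rfl, hn, ← hchip]
      · intro j k hj hk heq
        refine hinj j k (Nat.lt_succ_iff.mp hj) (Nat.lt_succ_iff.mp hk) ?_
        rw [← hagree j (Nat.lt_succ_iff.mp hj), ← hagree k (Nat.lt_succ_iff.mp hk)]
        exact heq
    · refine min_witness_inj _ _ _ 1 ?_ ?_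
      · rw [Function.iterate_one, ← hsx, ← hv, ← hchip]
      · intro j k hj hk _; omega
end

section
/- Consider a rotor-router walk on a locally finite bidirected graph, started at a vertex u and run for t steps, with the chip now at vertex w. Then any directed cycle formed by the current rotor arrows, all of whose vertices have been visited and exited at least once by the chip, must pass through the chip's current position w. Equivalently, the rotor arrows at exited vertices different from w contain no directed cycle. -/
open Function

/-- for a rotor-router walk on a locally finite bidirected graph,
started at `u` and run for `t` steps, any directed cycle formed by the current
rotor arrows all of whose vertices have been visited and exited at least once by
the chip must pass through the chip's current position. -/
theorem exited_rotor_cycle_passes_through_chip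
    {V : Type} (G : RotorGraph V) (hG : G.IsValid)
    (ρ0 : V → V) (hρ0 : ValidRotor G ρ0) (u : V) (t : ℕ)
    {m : ℕ} (hm : 0 < m) (c : ZMod m → V) (hcinj : Function.Injective c)
    (hcyc : ∀ i, ((G.walk ⟨ρ0, u⟩ t).rotor) (c i) = c (i + 1))
    (hexited : ∀ i, ∃ s < t, (G.walk ⟨ρ0, u⟩ s).chip = c i) :
    ∃ i, c i = (G.walk ⟨ρ0, u⟩ t).chip := by
  classical
  set W : ℕ → RotorState V := G.walk ⟨ρ0, u⟩ with hW
  have hstep : ∀ s, W (s + 1) = G.step (W s) := by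
    intro s
    simp [hW, RotorGraph.walk, Function.iterate_succ_apply']
  have hA : ∀ s, (W (s + 1)).rotor (W s).chip = (W (s + 1)).chip := by
    intro s; rw [hstep]; simp [RotorGraph.step]
  have hB : ∀ s v, v ≠ (W s).chip → (W (s + 1)).rotor v = (W s).rotor v := by
    intro s v hv; rw [hstep]; simp [RotorGraph.step, Function.update_of_ne hv]
  have hC : ∀ (v : V) (a b : ℕ), a ≤ b → (∀ x, a ≤ x → x < b → (W x).chip ≠ v) →
      (W b).rotor v = (W a).rotor v := by
    intro v a b hab
    induction b, hab using Nat.le_induction with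
    | base => intro _; rfl
    | succ n hn ih =>
      intro h
      rw [hB n v (fun hc => h n hn (Nat.lt_succ_self n) hc.symm),
        ih (fun x hx hx' => h x hx (by omega))]
  by_contra hno
  push_neg at hno
  set S : ZMod m → Set ℕ := fun i => {s | s < t ∧ (W s).chip = c i} with hS
  have hSne : ∀ i, (S i).Nonempty := by
    intro i; obtain ⟨s, hs, hcs⟩ := hexited i; exact ⟨s, hs, hcs⟩
  have hSbdd : ∀ i, BddAbove (S i) := fun i => ⟨t, fun s hs => le_of_lt hs.1⟩
  set L : ZMod m → ℕ := fun i => sSup (S i) with hL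
  have hLmem : ∀ i, L i ∈ S i := fun i => Nat.sSup_mem (hSne i) (hSbdd i)
  have hkey : ∀ i, L i + 1 ≤ L (i + 1) := by
    intro i
    obtain ⟨hLt, hLc⟩ := hLmem i
    have h1 : ∀ x, L i + 1 ≤ x → x < t → (W x).chip ≠ c i := by
      intro x hx hxt hc
      have : x ≤ L i := le_csSup (hSbdd i) ⟨hxt, hc⟩
      omega
    have hrot : (W t).rotor (c i) = (W (L i + 1)).rotor (c i) :=
      hC (c i) (L i + 1) t (by omega) h1
    have hchip : (W (L i + 1)).chip = c (i + 1) := by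
      have h2 := hA (L i)
      rw [hLc] at h2
      have h3 : (W (L i + 1)).rotor (c i) = c (i + 1) := hrot.symm.trans (hcyc i)
      exact h2.symm.trans h3
    have hlt : L i + 1 < t := by
      rcases Nat.lt_or_ge (L i + 1) t with h | h
      · exact h
      · have ht : L i + 1 = t := by omega
        rw [ht] at hchip
        exact absurd hchip.symm (hno (i + 1))
    exact le_csSup (hSbdd (i + 1)) ⟨hlt, hchip⟩
  have hmono : ∀ k : ℕ, L 0 + k ≤ L (k : ZMod m) := by
    intro k
    induction k with
    | zero => simp
    | succ n ih =>
      have h4 := hkey (n : ZMod m)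
      have h5 : ((n : ZMod m) + 1) = ((n + 1 : ℕ) : ZMod m) := by push_cast; ring
      rw [h5] at h4
      omega
  have hmm := hmono m
  rw [ZMod.natCast_self] at hmm
  omega
end

section
/- Consider a rotor-router walk on a locally finite bidirected graph started at a vertex u. At any time t >= 1, if the chip is currently at vertex w with w ≠ u, then the current rotor arrows contain a directed path from u to w, namely a sequence of distinct vertices u = x_1, x_2, ..., x_m = w such that the rotor at x_i points to x_{i+1} for all i < m. -/
open Function

/-- for a rotor-router walk on a locally finite bidirected graph
started at `u`, at any time `t ≥ 1`, if the chip is currently at `w ≠ u` then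
the current rotor arrows contain a directed path of distinct vertices from `u`
to `w`. -/
theorem rotor_arrows_contain_path_from_start_to_chip
    {V : Type} (G : RotorGraph V) (hG : G.IsValid)
    (ρ0 : V → V) (hρ0 : ValidRotor G ρ0) (u : V) (t : ℕ) (ht : 1 ≤ t)
    (hne : (G.walk ⟨ρ0, u⟩ t).chip ≠ u) :
    ∃ (n : ℕ) (x : Fin (n + 1) → V),
      x 0 = u ∧
      x (Fin.last n) = (G.walk ⟨ρ0, u⟩ t).chip ∧
      Function.Injective x ∧
      ∀ i : Fin n, ((G.walk ⟨ρ0, u⟩ t).rotor) (x i.castSucc) = x i.succ := by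
  classical
  set s0 : RotorState V := ⟨ρ0, u⟩ with hs0
  have key : ∀ T, ∃ k, ((G.walk s0 T).rotor)^[k] u = (G.walk s0 T).chip := by
    intro T
    induction T with
    | zero => exact ⟨0, rfl⟩
    | succ T ih =>
      set s := G.walk s0 T with hs
      have hex : ∃ k, (s.rotor)^[k] u = s.chip := ih
      set m := Nat.find hex with hmdef
      have hm : (s.rotor)^[m] u = s.chip := Nat.find_spec hex
      have hmin : ∀ j < m, (s.rotor)^[j] u ≠ s.chip := fun j hj => Nat.find_min hex hj
      have hstep : G.walk s0 (T + 1) = G.step s := by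
        rw [hs, RotorGraph.walk, RotorGraph.walk, Function.iterate_succ_apply']
      set f' : V → V := Function.update s.rotor s.chip (G.next s.chip (s.rotor s.chip))
        with hf'
      have hrot : (G.step s).rotor = f' := by
        show Function.update s.rotor s.chip (G.next s.chip (s.rotor s.chip)) = f'
        rw [hf']
      have hchip : (G.step s).chip = f' s.chip := by
        show Function.update s.rotor s.chip (G.next s.chip (s.rotor s.chip)) s.chip
            = f' s.chip
        rw [hf']
      have hagree : ∀ j ≤ m, f'^[j] u = (s.rotor)^[j] u := by
        intro j hj
        induction j with
        | zero => rfl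
        | succ j ihj =>
          rw [Function.iterate_succ_apply', Function.iterate_succ_apply',
            ihj (Nat.le_of_succ_le hj), hf',
            Function.update_of_ne (hmin j (Nat.lt_of_succ_le hj))]
      refine ⟨m + 1, ?_⟩
      rw [hstep, hrot, hchip, Function.iterate_succ_apply', hagree m le_rfl, hm]
  obtain ⟨k, hk⟩ := key t
  set s := G.walk s0 t with hs
  have hex : ∃ k, (s.rotor)^[k] u = s.chip := ⟨k, hk⟩
  set n := Nat.find hex with hn
  have hm : (s.rotor)^[n] u = s.chip := Nat.find_spec hex
  have hmin : ∀ j < n, (s.rotor)^[j] u ≠ s.chip := fun j hj => Nat.find_min hex hj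
  have hinj : ∀ i j : ℕ, i ≤ j → j ≤ n → (s.rotor)^[i] u = (s.rotor)^[j] u → i = j := by
    intro i j hij hjn heq
    by_contra hne'
    have hlt : i < j := lt_of_le_of_ne hij hne'
    have : (s.rotor)^[n - j + i] u = s.chip := by
      have : (s.rotor)^[n - j + j] u = (s.rotor)^[n - j + i] u := by
        rw [Function.iterate_add_apply, Function.iterate_add_apply, heq]
      rw [← this]
      have : n - j + j = n := Nat.sub_add_cancel hjn
      rw [this, hm]
    exact hmin (n - j + i) (by omega) this
  refine ⟨n, fun i => (s.rotor)^[(i : ℕ)] u, rfl, ?_, ?_, ?_⟩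
  · simp only [Fin.val_last, hm]
  · intro i j hij
    simp only [Fin.val_fin_le] at hij
    rcases le_total (i : ℕ) (j : ℕ) with h | h
    · exact Fin.ext (hinj i j h (Nat.lt_succ_iff.mp j.isLt) hij)
    · exact Fin.ext (hinj j i h (Nat.lt_succ_iff.mp i.isLt) hij.symm).symm
  · intro i
    simp only [Fin.coe_castSucc, Fin.val_succ, Function.iterate_succ_apply']
end
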